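/- Consider the general twisted-like ansatz ℙ^A = g Z_⊥^A + f ∂_⊥^A with g, f functions of the counting operators N_∥, N_⊥, together with 𝕃 = -ε_{ABC}V^C Z_⊥^A∂_⊥^B. The so(2,1) commutation relations [𝕃,ℙ^A] = ε^{ABC}V_C ℙ_B and [ℙ^A,ℙ^B] = ε^{ABC}V_C 𝕃 hold if and only if g f' - f ġ = 1, where f'(N_∥,N_⊥) = f(N_∥,N_⊥-1) - f(N_∥,N_⊥) and ġ(N_∥,N_⊥) = g(N_∥,N_⊥+1) - g(N_∥,N_⊥). -/
import Mathlib


noncomputable section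

open MvPolynomial

-- Polynomials in the commuting variables `Z^0, Z^1, Z^2`.
abbrev P3 := MvPolynomial (Fin 3) ℝ

/-- The metric `η = diag(-1, 1, 1)` (equal to its own inverse). -/
def eta : Fin 3 → ℝ := ![-1, 1, 1]

/-- The Levi-Civita symbol `ε_{ABC}` with `ε_{012} = 1`. -/
def eps (A B C : Fin 3) : ℝ :=
  (((A : ℕ) : ℝ) - ((B : ℕ) : ℝ)) * (((B : ℕ) : ℝ) - ((C : ℕ) : ℝ)) *
    (((C : ℕ) : ℝ) - ((A : ℕ) : ℝ)) / 2

/-- The partial derivative `∂/∂Z^A`. -/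
def Dop (A : Fin 3) : P3 →ₗ[ℝ] P3 := (pderiv A).toLinearMap

/-- The polynomial `Z·V = η_{AB} Z^A V^B`. -/
def ZdotV (V : Fin 3 → ℝ) : P3 := ∑ A : Fin 3, C (eta A * V A) * X A

/-- The transverse variable `Z_⊥^A = Z^A - (Z·V) V^A`. -/
def Zperp (V : Fin 3 → ℝ) (A : Fin 3) : P3 := X A - C (V A) * ZdotV V

/-- The parallel variable `Z_∥^A = (Z·V) V^A`. -/
def Zpar (V : Fin 3 → ℝ) (A : Fin 3) : P3 := C (V A) * ZdotV V

/-- The operator `V·∂ = V^A ∂/∂Z^A`. -/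
def VdotD (V : Fin 3 → ℝ) : P3 →ₗ[ℝ] P3 := ∑ A : Fin 3, V A • Dop A

/-- The transverse derivative `∂_⊥^A = ∂/∂Z_A - V^A (V·∂)` (with `∂/∂Z_A = η^{AB} ∂_B`). -/
def Dperp (V : Fin 3 → ℝ) (A : Fin 3) : P3 →ₗ[ℝ] P3 := eta A • Dop A - V A • VdotD V

/-- The parallel derivative `∂_∥^A = V^A (V·∂)`. -/
def Dpar (V : Fin 3 → ℝ) (A : Fin 3) : P3 →ₗ[ℝ] P3 := V A • VdotD V

/-- The transverse counting operator `N_⊥ = Z_⊥·∂_⊥ = η_{AB} Z_⊥^A ∂_⊥^B`. -/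
def Nperp (V : Fin 3 → ℝ) : P3 →ₗ[ℝ] P3 :=
  ∑ A : Fin 3, eta A • (LinearMap.mulLeft ℝ (Zperp V A) ∘ₗ Dperp V A)

/-- The parallel counting operator `N_∥ = Z_∥·∂_∥`. -/
def Npar (V : Fin 3 → ℝ) : P3 →ₗ[ℝ] P3 :=
  ∑ A : Fin 3, eta A • (LinearMap.mulLeft ℝ (Zpar V A) ∘ₗ Dpar V A)

/-- The twisted-like Lorentz generator `𝕃 = -ε_{ABC} V^C Z_⊥^A ∂_⊥^B`. -/
def Lgen (V : Fin 3 → ℝ) : P3 →ₗ[ℝ] P3 :=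
  -∑ A : Fin 3, ∑ B : Fin 3, ∑ C : Fin 3,
    (eps A B C * V C) • (LinearMap.mulLeft ℝ (Zperp V A) ∘ₗ Dperp V B)


/-- The standard compensator `V = (0, 0, 1)` (satisfying `V·V = 1`). -/
def Vst : Fin 3 → ℝ := ![0, 0, 1]

/-- A function `g(N_∥, N_⊥)` of the two counting operators, realized as the diagonal
operator multiplying each monomial of parallel degree `n` and transverse degree `k`
(with respect to the standard compensator `Vst`) by `g n k`. -/
def diagOp (g : ℕ → ℕ → ℝ) : P3 →ₗ[ℝ] P3 :=
  (basisMonomials (Fin 3) ℝ).constr ℝ fun d => g (d 2) (d 0 + d 1) • monomial d (1 : ℝ)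

/-- The general twisted-like ansatz `ℙ^A = g Z_⊥^A + f ∂_⊥^A`, where `g` and `f` are
functions of the counting operators `N_∥`, `N_⊥`. -/
def Pansatz (g f : ℕ → ℕ → ℝ) (A : Fin 3) : P3 →ₗ[ℝ] P3 :=
  diagOp g ∘ₗ LinearMap.mulLeft ℝ (Zperp Vst A) + diagOp f ∘ₗ Dperp Vst A

-- helpers
-- helpers
lemma Vst0 : Vst 0 = 0 := rfl
lemma Vst1 : Vst 1 = 0 := rfl
lemma Vst2 : Vst 2 = 1 := rfl
lemma eta0 : eta 0 = -1 := rfl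
lemma eta1 : eta 1 = 1 := rfl
lemma eta2 : eta 2 = 1 := rfl

lemma ZdotV_Vst : ZdotV Vst = X 2 := by
  simp [ZdotV, Fin.sum_univ_three, Vst0, Vst1, Vst2, eta2]

lemma Zperp_Vst_0 : Zperp Vst 0 = X 0 := by simp [Zperp, Vst0]
lemma Zperp_Vst_1 : Zperp Vst 1 = X 1 := by simp [Zperp, Vst1]
lemma Zperp_Vst_2 : Zperp Vst 2 = 0 := by simp [Zperp, ZdotV_Vst, Vst2]

lemma VdotD_Vst : VdotD Vst = Dop 2 := by
  simp [VdotD, Fin.sum_univ_three, Vst0, Vst1, Vst2]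

lemma Dperp_Vst_0 : Dperp Vst 0 = -Dop 0 := by
  rw [Dperp, Vst0, eta0]; simp; module
lemma Dperp_Vst_1 : Dperp Vst 1 = Dop 1 := by
  simp [Dperp, Vst1, eta1]
lemma Dperp_Vst_2 : Dperp Vst 2 = 0 := by
  simp [Dperp, VdotD_Vst, Vst2, eta2]

lemma Lgen_Vst : Lgen Vst =
    -(LinearMap.mulLeft ℝ (X 0) ∘ₗ Dop 1 + LinearMap.mulLeft ℝ (X 1) ∘ₗ Dop 0) := by
  simp only [Lgen, Fin.sum_univ_three, Vst0, Vst1, Vst2,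
    Dperp_Vst_0, Dperp_Vst_1, Dperp_Vst_2, Zperp_Vst_0, Zperp_Vst_1, Zperp_Vst_2]
  norm_num [eps]

def idx (a b n : ℕ) : Fin 3 →₀ ℕ :=
  Finsupp.single 0 a + Finsupp.single 1 b + Finsupp.single 2 n

def M (a b n : ℕ) : P3 := monomial (idx a b n) 1

lemma idx_apply0 (a b n : ℕ) : idx a b n 0 = a := by simp [idx, Finsupp.single_apply]
lemma idx_apply1 (a b n : ℕ) : idx a b n 1 = b := by simp [idx, Finsupp.single_apply]
lemma idx_apply2 (a b n : ℕ) : idx a b n 2 = n := by simp [idx, Finsupp.single_apply]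

lemma eq_idx (d : Fin 3 →₀ ℕ) : d = idx (d 0) (d 1) (d 2) := by
  ext i; fin_cases i <;> simp [idx, Finsupp.single_apply]

lemma idx_sub0 (a b n : ℕ) : idx a b n - Finsupp.single 0 1 = idx (a - 1) b n := by
  ext i; fin_cases i <;> simp [idx, Finsupp.single_apply]

lemma idx_sub1 (a b n : ℕ) : idx a b n - Finsupp.single 1 1 = idx a (b - 1) n := by
  ext i; fin_cases i <;> simp [idx, Finsupp.single_apply]

lemma idx_add0 (a b n : ℕ) : Finsupp.single 0 1 + idx a b n = idx (a + 1) b n := by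
  ext i; fin_cases i <;> simp [idx, Finsupp.single_apply] <;> omega

lemma idx_add1 (a b n : ℕ) : Finsupp.single 1 1 + idx a b n = idx a (b + 1) n := by
  ext i; fin_cases i <;> simp [idx, Finsupp.single_apply] <;> omega

lemma diagOp_M (g : ℕ → ℕ → ℝ) (a b n : ℕ) :
    diagOp g (M a b n) = g n (a + b) • M a b n := by
  have h := (basisMonomials (Fin 3) ℝ).constr_basis ℝ
    (fun d => g (d 2) (d 0 + d 1) • monomial d (1 : ℝ)) (idx a b n)
  rw [coe_basisMonomials] at h
  simpa [diagOp, M, idx_apply0, idx_apply1, idx_apply2] using h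

lemma Dop0_M (a b n : ℕ) : Dop 0 (M a b n) = (a : ℝ) • M (a - 1) b n := by
  simp [Dop, M, pderiv_monomial, idx_sub0, idx_apply0, smul_monomial]

lemma Dop1_M (a b n : ℕ) : Dop 1 (M a b n) = (b : ℝ) • M a (b - 1) n := by
  simp [Dop, M, pderiv_monomial, idx_sub1, idx_apply1, smul_monomial]

lemma X0_mul_M (a b n : ℕ) : X 0 * M a b n = M (a + 1) b n := by
  rw [M, M, show (X 0 : P3) = monomial (Finsupp.single 0 1) 1 from rfl, monomial_mul,
    one_mul, idx_add0]

lemma X1_mul_M (a b n : ℕ) : X 1 * M a b n = M a (b + 1) n := by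
  rw [M, M, show (X 1 : P3) = monomial (Finsupp.single 1 1) 1 from rfl, monomial_mul,
    one_mul, idx_add1]

lemma P0_M (g f : ℕ → ℕ → ℝ) (a b n : ℕ) :
    Pansatz g f 0 (M a b n) =
      g n (a + b + 1) • M (a + 1) b n - ((a : ℝ) * f n (a - 1 + b)) • M (a - 1) b n := by
  simp only [Pansatz, LinearMap.add_apply, LinearMap.comp_apply, LinearMap.mulLeft_apply,
    Zperp_Vst_0, Dperp_Vst_0, LinearMap.neg_apply, X0_mul_M, Dop0_M, map_neg, map_smul,
    diagOp_M, smul_smul]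
  ring_nf

lemma P1_M (g f : ℕ → ℕ → ℝ) (a b n : ℕ) :
    Pansatz g f 1 (M a b n) =
      g n (a + b + 1) • M a (b + 1) n + ((b : ℝ) * f n (a + (b - 1))) • M a (b - 1) n := by
  simp only [Pansatz, LinearMap.add_apply, LinearMap.comp_apply, LinearMap.mulLeft_apply,
    Zperp_Vst_1, Dperp_Vst_1, X1_mul_M, Dop1_M, map_smul, diagOp_M, smul_smul]
  rw [show a + (b + 1) = a + b + 1 by ring]

lemma P2_zero (g f : ℕ → ℕ → ℝ) : Pansatz g f 2 = 0 := by
  simp [Pansatz, Zperp_Vst_2, Dperp_Vst_2]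

lemma L_M (a b n : ℕ) :
    Lgen Vst (M a b n) = -((b : ℝ) • M (a + 1) (b - 1) n + (a : ℝ) • M (a - 1) (b + 1) n) := by
  simp only [Lgen_Vst, LinearMap.neg_apply, LinearMap.add_apply, LinearMap.comp_apply,
    LinearMap.mulLeft_apply, Dop0_M, Dop1_M, smul_eq_mul, mul_smul]
  rw [mul_smul_comm, mul_smul_comm, X0_mul_M, X1_mul_M]
lemma ext_M {T₁ T₂ : P3 →ₗ[ℝ] P3} (h : ∀ a b n : ℕ, T₁ (M a b n) = T₂ (M a b n)) :
    T₁ = T₂ := by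
  refine (basisMonomials (Fin 3) ℝ).ext fun d => ?_
  have hd : (basisMonomials (Fin 3) ℝ) d = M (d 0) (d 1) (d 2) := by
    rw [coe_basisMonomials]
    exact congrArg (fun s => monomial s (1 : ℝ)) (eq_idx d)
  rw [hd]; exact h _ _ _

lemma LP0 (g f : ℕ → ℕ → ℝ) :
    Lgen Vst ∘ₗ Pansatz g f 0 - Pansatz g f 0 ∘ₗ Lgen Vst = -Pansatz g f 1 := by
  refine ext_M fun a b n => ?_
  simp only [LinearMap.sub_apply, LinearMap.comp_apply, LinearMap.neg_apply,
    P0_M, P1_M, L_M, map_neg, map_add, map_sub, map_smul, smul_smul, smul_add, smul_sub,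
    smul_neg]
  rcases a with _ | _ | a <;> rcases b with _ | b <;>
    simp only [Nat.succ_sub_one, Nat.zero_sub, Nat.cast_zero, zero_mul, zero_smul,
      Nat.cast_add, Nat.cast_one, Nat.add_zero, Nat.zero_add, add_zero, zero_add,
      smul_zero, neg_zero, mul_zero, zero_sub, sub_zero, neg_neg] <;>
    push_cast <;> match_scalars <;> ring

lemma LP1 (g f : ℕ → ℕ → ℝ) :
    Lgen Vst ∘ₗ Pansatz g f 1 - Pansatz g f 1 ∘ₗ Lgen Vst = -Pansatz g f 0 := by
  refine ext_M fun a b n => ?_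
  simp only [LinearMap.sub_apply, LinearMap.comp_apply, LinearMap.neg_apply,
    P0_M, P1_M, L_M, map_neg, map_add, map_sub, map_smul, smul_smul, smul_add, smul_sub,
    smul_neg]
  rcases b with _ | _ | b <;> rcases a with _ | a <;>
    simp only [Nat.succ_sub_one, Nat.zero_sub, Nat.cast_zero, zero_mul, zero_smul,
      Nat.cast_add, Nat.cast_one, Nat.add_zero, Nat.zero_add, add_zero, zero_add,
      smul_zero, neg_zero, mul_zero, zero_sub, sub_zero, neg_neg] <;>
    push_cast <;> match_scalars <;> ring
lemma PP01 (g f : ℕ → ℕ → ℝ)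
    (H : ∀ n k : ℕ, f n k * g n (k + 1) - f n (k + 1) * g n (k + 2) = 1) :
    Pansatz g f 0 ∘ₗ Pansatz g f 1 - Pansatz g f 1 ∘ₗ Pansatz g f 0 = -Lgen Vst := by
  refine ext_M fun a b n => ?_
  simp only [LinearMap.sub_apply, LinearMap.comp_apply, LinearMap.neg_apply,
    P0_M, P1_M, L_M, map_neg, map_add, map_sub, map_smul, smul_smul, smul_add, smul_sub,
    smul_neg, neg_neg]
  rcases a with _ | a <;> rcases b with _ | b <;>
    simp only [Nat.succ_sub_one, Nat.zero_sub, Nat.cast_zero, zero_mul, zero_smul,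
      Nat.cast_add, Nat.cast_one, Nat.add_zero, Nat.zero_add, add_zero, zero_add,
      smul_zero, neg_zero, mul_zero, zero_sub, sub_zero, neg_neg] <;>
    (try simp only [Nat.add_assoc, Nat.add_comm, Nat.add_left_comm]) <;>
    push_cast <;> match_scalars <;>
    first
      | ring1
      | linear_combination ((b : ℝ) + 1) * H n b
      | linear_combination ((a : ℝ) + 1) * H n a
      | (have hh : f n (a + (b + 1)) * g n (a + (b + 2)) - f n (a + (b + 2)) * g n (a + (b + 3)) = 1 :=
            H n (a + (b + 1))
         first
          | linear_combination ((a : ℝ) + 1) * hh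
          | linear_combination ((b : ℝ) + 1) * hh)

lemma coeff_M (x y z a b n : ℕ) :
    MvPolynomial.coeff (idx x y z) (M a b n) = if idx a b n = idx x y z then 1 else 0 := by
  rw [M, coeff_monomial]

lemma idx_eq_iff (a b n x y z : ℕ) :
    idx a b n = idx x y z ↔ a = x ∧ b = y ∧ n = z := by
  constructor
  · intro h
    refine ⟨?_, ?_, ?_⟩
    · rw [← idx_apply0 a b n, h, idx_apply0]
    · rw [← idx_apply1 a b n, h, idx_apply1]
    · rw [← idx_apply2 a b n, h, idx_apply2]
  · rintro ⟨rfl, rfl, rfl⟩; rfl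


lemma RHS1_0 (g f : ℕ → ℕ → ℝ) :
    Lgen Vst ∘ₗ Pansatz g f 0 - Pansatz g f 0 ∘ₗ Lgen Vst =
      eta 0 • ∑ B : Fin 3, ∑ C : Fin 3, (eps 0 B C * Vst C) • Pansatz g f B := by
  rw [LP0]
  simp only [Fin.sum_univ_three]
  norm_num [eps, Vst0, Vst1, Vst2, eta0, neg_smul, one_smul]
  module

lemma RHS1_1 (g f : ℕ → ℕ → ℝ) :
    Lgen Vst ∘ₗ Pansatz g f 1 - Pansatz g f 1 ∘ₗ Lgen Vst =
      eta 1 • ∑ B : Fin 3, ∑ C : Fin 3, (eps 1 B C * Vst C) • Pansatz g f B := by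
  rw [LP1]
  simp only [Fin.sum_univ_three]
  norm_num [eps, Vst0, Vst1, Vst2, eta1, neg_smul, one_smul]
  module

lemma RHS1_2 (g f : ℕ → ℕ → ℝ) :
    Lgen Vst ∘ₗ Pansatz g f 2 - Pansatz g f 2 ∘ₗ Lgen Vst =
      eta 2 • ∑ B : Fin 3, ∑ C : Fin 3, (eps 2 B C * Vst C) • Pansatz g f B := by
  rw [P2_zero]
  simp only [Fin.sum_univ_three]
  norm_num [eps, Vst0, Vst1, Vst2, eta2, neg_smul, one_smul]

lemma RHS2_01 (g f : ℕ → ℕ → ℝ)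
    (H : ∀ n k : ℕ, f n k * g n (k + 1) - f n (k + 1) * g n (k + 2) = 1) :
    Pansatz g f 0 ∘ₗ Pansatz g f 1 - Pansatz g f 1 ∘ₗ Pansatz g f 0 =
      (eta 0 * eta 1) • ∑ C : Fin 3, (eps 0 1 C * Vst C) • Lgen Vst := by
  rw [PP01 g f H]
  simp only [Fin.sum_univ_three]
  norm_num [eps, Vst0, Vst1, Vst2, eta0, eta1]
  module

lemma RHS2_10 (g f : ℕ → ℕ → ℝ)
    (H : ∀ n k : ℕ, f n k * g n (k + 1) - f n (k + 1) * g n (k + 2) = 1) :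
    Pansatz g f 1 ∘ₗ Pansatz g f 0 - Pansatz g f 0 ∘ₗ Pansatz g f 1 =
      (eta 1 * eta 0) • ∑ C : Fin 3, (eps 1 0 C * Vst C) • Lgen Vst := by
  rw [← neg_sub, PP01 g f H, neg_neg]
  simp only [Fin.sum_univ_three]
  norm_num [eps, Vst0, Vst1, Vst2, eta0, eta1]
  module

lemma RHS2_diag (g f : ℕ → ℕ → ℝ) (A : Fin 3) :
    Pansatz g f A ∘ₗ Pansatz g f A - Pansatz g f A ∘ₗ Pansatz g f A =
      (eta A * eta A) • ∑ C : Fin 3, (eps A A C * Vst C) • Lgen Vst := by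
  simp [eps, Fin.sum_univ_three]

lemma RHS2_left2 (g f : ℕ → ℕ → ℝ) (B : Fin 3) :
    Pansatz g f 2 ∘ₗ Pansatz g f B - Pansatz g f B ∘ₗ Pansatz g f 2 =
      (eta 2 * eta B) • ∑ C : Fin 3, (eps 2 B C * Vst C) • Lgen Vst := by
  rw [P2_zero]
  fin_cases B <;>
    · simp only [Fin.sum_univ_three]
      norm_num [eps, Vst0, Vst1, Vst2, eta0, eta1, eta2, P2_zero]

lemma RHS2_right2 (g f : ℕ → ℕ → ℝ) (A : Fin 3) :
    Pansatz g f A ∘ₗ Pansatz g f 2 - Pansatz g f 2 ∘ₗ Pansatz g f A =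
      (eta A * eta 2) • ∑ C : Fin 3, (eps A 2 C * Vst C) • Lgen Vst := by
  rw [P2_zero]
  fin_cases A <;>
    · simp only [Fin.sum_univ_three]
      norm_num [eps, Vst0, Vst1, Vst2, eta0, eta1, eta2, P2_zero]

lemma RHS2 (g f : ℕ → ℕ → ℝ)
    (H : ∀ n k : ℕ, f n k * g n (k + 1) - f n (k + 1) * g n (k + 2) = 1) (A B : Fin 3) :
    Pansatz g f A ∘ₗ Pansatz g f B - Pansatz g f B ∘ₗ Pansatz g f A =
      (eta A * eta B) • ∑ C : Fin 3, (eps A B C * Vst C) • Lgen Vst := by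
  fin_cases A <;> fin_cases B
  · exact RHS2_diag g f 0
  · exact RHS2_01 g f H
  · exact RHS2_right2 g f 0
  · exact RHS2_10 g f H
  · exact RHS2_diag g f 1
  · exact RHS2_right2 g f 1
  · exact RHS2_left2 g f 0
  · exact RHS2_left2 g f 1
  · exact RHS2_diag g f 2

/-- The ansatz `ℙ^A = g Z_⊥^A + f ∂_⊥^A` together with `𝕃 = -ε_{ABC} V^C Z_⊥^A ∂_⊥^B`
satisfies the `so(2,1)` commutation relations `[𝕃, ℙ^A] = ε^{ABC} V_C ℙ_B` and
`[ℙ^A, ℙ^B] = ε^{ABC} V_C 𝕃` if and only if `g f' - f ġ = 1`, where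
`f'(N_∥, N_⊥) = f(N_∥, N_⊥ - 1) - f(N_∥, N_⊥)` and
`ġ(N_∥, N_⊥) = g(N_∥, N_⊥ + 1) - g(N_∥, N_⊥)` (the identity being evaluated at every
parallel degree `n` and every transverse degree `k + 1 ≥ 1`). -/
theorem twisted_like_ansatz_iff (g f : ℕ → ℕ → ℝ) :
    ((∀ A : Fin 3,
      Lgen Vst ∘ₗ Pansatz g f A - Pansatz g f A ∘ₗ Lgen Vst =
        eta A • ∑ B : Fin 3, ∑ C : Fin 3, (eps A B C * Vst C) • Pansatz g f B) ∧
    (∀ A B : Fin 3,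
      Pansatz g f A ∘ₗ Pansatz g f B - Pansatz g f B ∘ₗ Pansatz g f A =
        (eta A * eta B) • ∑ C : Fin 3, (eps A B C * Vst C) • Lgen Vst)) ↔
    (∀ n k : ℕ,
      g n (k + 1) * (f n k - f n (k + 1)) - f n (k + 1) * (g n (k + 2) - g n (k + 1)) = 1) := by
  constructor
  · rintro ⟨-, h2⟩
    intro n k
    have hO : Pansatz g f 0 ∘ₗ Pansatz g f 1 - Pansatz g f 1 ∘ₗ Pansatz g f 0 = -Lgen Vst := by
      rw [h2 0 1]
      simp only [Fin.sum_univ_three]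
      norm_num [eps, Vst0, Vst1, Vst2, eta0, eta1]
      module
    have hM := LinearMap.congr_fun hO (M 0 (k + 1) n)
    simp only [LinearMap.sub_apply, LinearMap.comp_apply, LinearMap.neg_apply,
      P0_M, P1_M, L_M, map_neg, map_add, map_sub, map_smul, smul_smul, smul_add, smul_sub,
      smul_neg, neg_neg, Nat.succ_sub_one, Nat.zero_sub, Nat.cast_zero, zero_mul, zero_smul,
      Nat.cast_add, Nat.cast_one, Nat.add_zero, Nat.zero_add, add_zero, zero_add, smul_zero,
      neg_zero, mul_zero, zero_sub, sub_zero] at hM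
    simp only [Nat.add_assoc, Nat.add_comm, Nat.add_left_comm] at hM
    have hc := congrArg (MvPolynomial.coeff (idx 1 k n)) hM
    simp only [coeff_sub, coeff_add, coeff_smul, coeff_M, idx_eq_iff, smul_eq_mul] at hc
    norm_num at hc
    have hk : ((k : ℝ) + 1) ≠ 0 := by positivity
    have hX : f n k * g n (k + 1) - f n (k + 1) * g n (k + 2) = 1 := by
      apply mul_left_cancel₀ hk
      linear_combination hc
    linear_combination hX
  · intro hgf
    have H : ∀ n k : ℕ, f n k * g n (k + 1) - f n (k + 1) * g n (k + 2) = 1 := fun n k => by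
      linear_combination hgf n k
    refine ⟨fun A => ?_, RHS2 g f H⟩
    fin_cases A
    · exact RHS1_0 g f
    · exact RHS1_1 g f
    · exact RHS1_2 g f
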